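/- Every edge xy of the Triplex satisfies W_1(μ_x^{1/4}, μ_y^{1/4}) = 1, i.e. κ_{1/4}(x,y) = 0; hence the Triplex is Ricci-flat. -/

import Mathlib

open scoped ENNReal

namespace RicciFlatCubic

variable {V : Type*}

/-- The probability measure `μ_x^p` on the vertex set: mass `p` at `x`,
mass `(1-p)/deg x` at each neighbor of `x`, and `0` elsewhere. -/
noncomputable def muMeasure (G : SimpleGraph V) [G.LocallyFinite] (p : ℝ≥0∞) (x : V) :
    V → ℝ≥0∞ := fun z =>
  haveI : DecidableEq V := Classical.decEq V
  haveI : Decidable (G.Adj x z) := Classical.dec _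
  if z = x then p
  else if G.Adj x z then (1 - p) / (G.degree x : ℝ≥0∞)
  else 0

/-- `π : V × V → [0,1]` is a transport plan from `μ₁` to `μ₂` if its marginals are `μ₁`, `μ₂`. -/
def IsTransportPlan (μ₁ μ₂ : V → ℝ≥0∞) (π : V → V → ℝ≥0∞) : Prop :=
  (∀ u v, π u v ≤ 1) ∧ (∀ u, ∑' v, π u v = μ₁ u) ∧ (∀ v, ∑' u, π u v = μ₂ v)

/-- The Wasserstein distance `W₁(μ₁, μ₂)`: the infimum over all transport plans of the
transport cost `∑ d(u,v) π(u,v)`, where `d` is the shortest-path distance in `G`. -/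
noncomputable def W1 (G : SimpleGraph V) (μ₁ μ₂ : V → ℝ≥0∞) : ℝ≥0∞ :=
  ⨅ π : {π : V → V → ℝ≥0∞ // IsTransportPlan μ₁ μ₂ π},
    ∑' q : V × V, (G.dist q.1 q.2 : ℝ≥0∞) * π.1 q.1 q.2

/-- The `p`-Ollivier-Ricci curvature `κ_p(x,y) = 1 - W₁(μ_x^p, μ_y^p)` (as a real number),
for a real idleness parameter `p`. -/
noncomputable def kappa (G : SimpleGraph V) [G.LocallyFinite] (p : ℝ) (x y : V) : ℝ :=
  1 - (W1 G (muMeasure G (ENNReal.ofReal p) x) (muMeasure G (ENNReal.ofReal p) y)).toReal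

/-- The edge `xy` lies on two 5-cycles whose vertex sets intersect exactly in `{x, y}`. -/
def TwoPentagons (G : SimpleGraph V) (x y : V) : Prop :=
  ∃ P₁ P₂ : G.Walk x x, P₁.IsCycle ∧ P₂.IsCycle ∧ P₁.length = 5 ∧ P₂.length = 5 ∧
    s(x, y) ∈ P₁.edges ∧ s(x, y) ∈ P₂.edges ∧
    {v | v ∈ P₁.support} ∩ {v | v ∈ P₂.support} = {x, y}

/-- The Petersen graph as the Kneser graph `K(5,2)`. -/
def petersen : SimpleGraph {s : Finset (Fin 5) // s.card = 2} where
  Adj a b := Disjoint a.1 b.1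
  symm := ⟨fun _ _ h => h.symm⟩
  loopless := by
    constructor
    rintro ⟨s, hs⟩ h
    rw [disjoint_self] at h
    simp only [Finset.bot_eq_empty] at h
    simp [h] at hs

/-- The Triplex: a 12-cycle on `ℤ/12ℤ` together with six chords. -/
def triplex : SimpleGraph (ZMod 12) :=
  SimpleGraph.fromRel fun i j =>
    j = i + 1 ∨ (i = 1 ∧ j = 7) ∨ (i = 2 ∧ j = 10) ∨ (i = 3 ∧ j = 8) ∨
      (i = 4 ∧ j = 12) ∨ (i = 5 ∧ j = 9) ∨ (i = 6 ∧ j = 11)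

/-- The dodecahedral graph: layer `0` is the outer 5-cycle `a`, layers `1`, `2` form the
middle 10-cycle `b₁ c₁ b₂ c₂ … b₅ c₅`, layer `3` is the inner 5-cycle `d`. -/
def dodecahedral : SimpleGraph (Fin 4 × ZMod 5) :=
  SimpleGraph.fromRel fun p q =>
    (p.1 = 0 ∧ q.1 = 0 ∧ q.2 = p.2 + 1) ∨
    (p.1 = 0 ∧ q.1 = 1 ∧ q.2 = p.2) ∨
    (p.1 = 1 ∧ q.1 = 2 ∧ q.2 = p.2) ∨
    (p.1 = 2 ∧ q.1 = 1 ∧ q.2 = p.2 + 1) ∨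
    (p.1 = 2 ∧ q.1 = 3 ∧ q.2 = p.2) ∨
    (p.1 = 3 ∧ q.1 = 3 ∧ q.2 = p.2 + 1)

/-- The half-dodecahedral graph: inner 5-cycle `y` (`Sum.inl`), outer 10-cycle `x`
(`Sum.inr`), and spokes `yᵢ ~ x_{2i-1}`. -/
def halfDodecahedral : SimpleGraph (ZMod 5 ⊕ ZMod 10) :=
  SimpleGraph.fromRel fun p q =>
    (∃ i : ZMod 5, p = Sum.inl i ∧ q = Sum.inl (i + 1)) ∨
    (∃ j : ZMod 10, p = Sum.inr j ∧ q = Sum.inr (j + 1)) ∨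
    (∃ i : ZMod 5, p = Sum.inl i ∧ q = Sum.inr (2 * (i.val : ZMod 10) - 1))

/-- The two-sided infinite path on `ℤ`. -/
def infinitePath : SimpleGraph ℤ := SimpleGraph.fromRel fun i j => j = i + 1

/-- The cycle `Cₙ` on `ℤ/nℤ`. -/
def cycleZMod (n : ℕ) : SimpleGraph (ZMod n) := SimpleGraph.fromRel fun i j => j = i + 1

noncomputable instance (v : {s : Finset (Fin 5) // s.card = 2}) :
    Fintype (petersen.neighborSet v) := (Set.toFinite _).fintype

noncomputable instance (v : ZMod 12) : Fintype (triplex.neighborSet v) :=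
  (Set.toFinite _).fintype

noncomputable instance (v : Fin 4 × ZMod 5) : Fintype (dodecahedral.neighborSet v) :=
  (Set.toFinite _).fintype


/-!
Every vertex of the Triplex has degree 3, so `μ_x^{1/4}` is the uniform measure of mass `1/4` on
the closed neighbourhood `{x, y, a₁, a₂}` of `x`, and `μ_y^{1/4}` the one on `{y, x, b₁, b₂}`.
The edge `xy` lies on two pentagons `x aᵢ wᵢ bᵢ y`, so leaving `x`, `y` in place and moving each
`aᵢ` to `bᵢ` costs `(2 + 2) / 4 = 1`. Conversely, no triangle or quadrilateral contains `xy`, so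
the 1-Lipschitz function `min (d(·, {b₁, b₂})) 2` is `2` at the `aᵢ` and `0` at the `bᵢ`, and weak
Kantorovich duality gives `W₁ ≥ 1`. Both local conditions are finite checks on the Triplex.
-/

open SimpleGraph

section Transport

variable {V : Type*} (G : SimpleGraph V)

theorem W1_comp_symm_le (μ : V → ℝ≥0∞) (hμ : ∀ u, μ u ≤ 1) (e : V ≃ V) :
    W1 G μ (μ ∘ e.symm) ≤ ∑' u, (G.dist u (e u) : ℝ≥0∞) * μ u := by
  classical
  refine iInf_le_of_le ⟨fun u v => if v = e u then μ u else 0, fun u v => ?_, fun u => ?_,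
    fun v => ?_⟩ ?_
  · dsimp only
    split_ifs
    exacts [hμ u, zero_le_one]
  · exact tsum_ite_eq (e u) (fun _ => μ u)
  · rw [tsum_eq_single (e.symm v) fun u hu => if_neg fun h => hu (by rw [h, e.symm_apply_apply])]
    exact if_pos (e.apply_symm_apply v).symm
  · rw [ENNReal.tsum_prod (f := fun u v => (G.dist u v : ℝ≥0∞) * if v = e u then μ u else 0)]
    simp_rw [mul_ite, mul_zero]
    exact (tsum_congr fun u => tsum_ite_eq (e u) _).le

theorem tsum_mul_le_W1_add (f : V → ℝ≥0∞) (hf : ∀ u v, f u ≤ G.dist u v + f v)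
    (μ₁ μ₂ : V → ℝ≥0∞) :
    ∑' u, f u * μ₁ u ≤ W1 G μ₁ μ₂ + ∑' v, f v * μ₂ v := by
  rw [W1, ENNReal.iInf_add]
  refine le_iInf ?_
  rintro ⟨π, -, hrow, hcol⟩
  change _ ≤ ∑' q : V × V, (G.dist q.1 q.2 : ℝ≥0∞) * π q.1 q.2 + _
  calc ∑' u, f u * μ₁ u = ∑' u, ∑' v, f u * π u v := by
        simp_rw [ENNReal.tsum_mul_left, hrow]
    _ ≤ ∑' u, ∑' v, ((G.dist u v : ℝ≥0∞) * π u v + f v * π u v) := by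
        gcongr with u v
        rw [← add_mul]
        gcongr
        exact hf u v
    _ = _ := by
        rw [ENNReal.tsum_prod (f := fun u v => (G.dist u v : ℝ≥0∞) * π u v)]
        simp_rw [ENNReal.tsum_add]
        rw [ENNReal.tsum_comm (f := fun u v => f v * π u v)]
        simp_rw [ENNReal.tsum_mul_left, hcol]

theorem le_dist_add_of_adj (hG : G.Connected) {f : V → ℕ}
    (hf : ∀ u v, G.Adj u v → f u ≤ f v + 1) (u v : V) : f u ≤ G.dist u v + f v := by
  have walk_le : ∀ {u v} (p : G.Walk u v), f u ≤ p.length + f v := by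
    intro u v p
    induction p with
    | nil => simp
    | cons h p ih => grind [Walk.length_cons, hf _ _ h]
  obtain ⟨p, hp⟩ := (hG u v).exists_walk_length_eq_dist
  exact hp ▸ walk_le p

end Transport

section Cubic

variable {V : Type*} (G : SimpleGraph V)

theorem tsum_mul_indicator_const (f : V → ℝ≥0∞) (s : Finset V) (c : ℝ≥0∞) :
    ∑' z, f z * (s : Set V).indicator (fun _ => c) z = c * ∑ z ∈ s, f z := by
  rw [tsum_eq_sum (s := s) fun z hz => by simp [hz], Finset.mul_sum]
  exact Finset.sum_congr rfl fun z hz => by simp [hz, mul_comm]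

theorem muMeasure_quarter [DecidableEq V] [G.LocallyFinite] {x : V} (hx : G.degree x = 3) :
    muMeasure G (1/4) x = (↑(insert x (G.neighborFinset x)) : Set V).indicator fun _ => 1/4 := by
  have hmass : ((1 : ℝ≥0∞) - 4⁻¹) / 3 = 4⁻¹ := by
    rw [← ENNReal.toReal_eq_toReal_iff' (by finiteness) (by finiteness), ENNReal.toReal_div,
      ENNReal.toReal_sub_of_le (by norm_num) (by norm_num)]
    norm_num
  ext z
  by_cases hzx : z = x
  · simp [muMeasure, hzx]
  · by_cases hadj : G.Adj x z <;> simp [muMeasure, hzx, hadj, hx, hmass]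

theorem sum_insert_neighborFinset_of_adj [DecidableEq V] [G.LocallyFinite] {M : Type*}
    [AddCommMonoid M] (g : V → M) {x y : V} (hxy : G.Adj x y) :
    ∑ z ∈ insert x (G.neighborFinset x), g z =
      g x + (g y + ∑ z ∈ (G.neighborFinset x).erase y, g z) := by
  rw [Finset.sum_insert (by simp), ← Finset.add_sum_erase _ _ (by simpa using hxy)]

open Classical in
/-- `min (d(u, B)) 2`, the distance to `B` truncated at `2`. -/
noncomputable def truncDist (B : Set V) (u : V) : ℕ :=
  if u ∈ B then 0 else if ∃ b ∈ B, G.Adj u b then 1 else 2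

theorem truncDist_le_add_one (B : Set V) {u v : V} (h : G.Adj u v) :
    truncDist G B u ≤ truncDist G B v + 1 := by
  unfold truncDist
  split_ifs <;> grind

variable [DecidableEq V] [G.LocallyFinite] {x y : V}

theorem one_le_W1_muMeasure_quarter (hG : G.Connected) (hxy : G.Adj x y)
    (hx : G.degree x = 3) (hy : G.degree y = 3)
    (hgirth : ∀ a ∈ (G.neighborFinset x).erase y, ∀ b ∈ (G.neighborFinset y).erase x,
      a ≠ b ∧ ¬G.Adj a b) :
    1 ≤ W1 G (muMeasure G (1/4) x) (muMeasure G (1/4) y) := by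
  set B := (G.neighborFinset y).erase x
  set f := truncDist G B
  have hfA : ∀ a ∈ (G.neighborFinset x).erase y, f a = 2 := fun a ha => by
    simp only [f, truncDist, Finset.mem_coe]
    rw [if_neg fun hb => (hgirth a ha a hb).1 rfl,
      if_neg fun ⟨b, hb, hab⟩ => (hgirth a ha b hb).2 hab]
  have hfB : ∀ b ∈ B, f b = 0 := fun b hb => if_pos hb
  have hsum : ∑ z ∈ insert x (G.neighborFinset x), f z =
      4 + ∑ z ∈ insert y (G.neighborFinset y), f z := by
    rw [sum_insert_neighborFinset_of_adj G f hxy, sum_insert_neighborFinset_of_adj G f hxy.symm,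
      Finset.sum_congr rfl hfA, Finset.sum_congr rfl hfB, Finset.sum_const,
      Finset.card_erase_of_mem (by simpa using hxy), card_neighborFinset_eq_degree, hx]
    simp only [Finset.sum_const_zero, smul_eq_mul]
    ring
  have hf : ∀ u v, (f u : ℝ≥0∞) ≤ G.dist u v + f v := fun u v => by
    exact_mod_cast le_dist_add_of_adj G hG (fun _ _ => truncDist_le_add_one G B) u v
  have hμ : ∀ {v}, G.degree v = 3 → ∑' z, (f z : ℝ≥0∞) * muMeasure G (1/4) v z =
      1/4 * ↑(∑ z ∈ insert v (G.neighborFinset v), f z) :=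
    fun hv => by rw [muMeasure_quarter G hv, tsum_mul_indicator_const, Nat.cast_sum]
  have key := tsum_mul_le_W1_add G _ hf (muMeasure G (1/4) x) (muMeasure G (1/4) y)
  rw [hμ hx, hμ hy, hsum, Nat.cast_add, mul_add,
    ENNReal.add_le_add_iff_right (by finiteness)] at key
  rwa [Nat.cast_ofNat, ENNReal.div_mul_cancel (by norm_num) (by norm_num)] at key

theorem W1_muMeasure_quarter_le_one (hxy : G.Adj x y) (hx : G.degree x = 3)
    (hy : G.degree y = 3)
    (hgirth : ∀ a ∈ (G.neighborFinset x).erase y, ∀ b ∈ (G.neighborFinset y).erase x, a ≠ b)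
    (hpent : ∃ a₁ ∈ (G.neighborFinset x).erase y, ∃ a₂ ∈ (G.neighborFinset x).erase y,
      ∃ b₁ ∈ (G.neighborFinset y).erase x, ∃ b₂ ∈ (G.neighborFinset y).erase x,
      a₁ ≠ a₂ ∧ b₁ ≠ b₂ ∧ (∃ w, G.Adj a₁ w ∧ G.Adj w b₁) ∧ (∃ w, G.Adj a₂ w ∧ G.Adj w b₂)) :
    W1 G (muMeasure G (1/4) x) (muMeasure G (1/4) y) ≤ 1 := by
  obtain ⟨a₁, ha₁, a₂, ha₂, b₁, hb₁, b₂, hb₂, ha, hb, ⟨w₁, h₁, h₁'⟩, ⟨w₂, h₂, h₂'⟩⟩ := hpent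
  have hcard : ∀ {v w}, G.degree v = 3 → G.Adj v w → ((G.neighborFinset v).erase w).card = 2 :=
    fun hv hvw => by
      rw [Finset.card_erase_of_mem (by simpa using hvw), card_neighborFinset_eq_degree, hv]
  have hA : (G.neighborFinset x).erase y = {a₁, a₂} :=
    (Finset.eq_of_subset_of_card_le (by simp [Finset.insert_subset_iff, ha₁, ha₂])
      (by rw [hcard hx hxy, Finset.card_pair ha])).symm
  have hB : (G.neighborFinset y).erase x = {b₁, b₂} :=
    (Finset.eq_of_subset_of_card_le (by simp [Finset.insert_subset_iff, hb₁, hb₂])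
      (by rw [hcard hy hxy.symm, Finset.card_pair hb])).symm
  have h₁₂ := hgirth a₁ (by simp [hA]) b₂ (by simp [hB])
  simp only [Finset.mem_erase, mem_neighborFinset] at ha₁ ha₂ hb₁ hb₂
  let e := (Equiv.swap a₂ b₂).trans (Equiv.swap a₁ b₁)
  have hex : e x = x := by
    simp [e, Equiv.swap_apply_of_ne_of_ne, ha₁.2.ne, ha₂.2.ne, hb₁.1.symm, hb₂.1.symm]
  have hey : e y = y := by
    simp [e, Equiv.swap_apply_of_ne_of_ne, ha₁.1.symm, ha₂.1.symm, hb₁.2.ne, hb₂.2.ne]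
  have he₁ : e a₁ = b₁ := by simp [e, Equiv.swap_apply_of_ne_of_ne, ha, h₁₂]
  have he₂ : e a₂ = b₂ := by simp [e, Equiv.swap_apply_of_ne_of_ne, Ne.symm h₁₂, hb.symm]
  have hN : (insert x (G.neighborFinset x)).map e.toEmbedding = insert y (G.neighborFinset y) := by
    rw [← Finset.insert_erase ((G.mem_neighborFinset x y).2 hxy), hA,
      ← Finset.insert_erase ((G.mem_neighborFinset y x).2 hxy.symm), hB]
    simp [hex, hey, he₁, he₂, Finset.insert_comm]
  have hμ : muMeasure G (1/4) y = muMeasure G (1/4) x ∘ e.symm := by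
    rw [muMeasure_quarter G hx, muMeasure_quarter G hy, ← hN]
    ext z
    simp only [Function.comp_apply, Set.indicator_apply, Finset.mem_coe, Finset.mem_map_equiv]
  have hcost : ∑ u ∈ insert x (G.neighborFinset x), G.dist u (e u) ≤ 4 := by
    rw [sum_insert_neighborFinset_of_adj G _ hxy, hA, Finset.sum_pair ha, hex, hey, he₁, he₂,
      SimpleGraph.dist_self, SimpleGraph.dist_self]
    have d₁ := dist_le (.cons h₁ (.cons h₁' .nil))
    have d₂ := dist_le (.cons h₂ (.cons h₂' .nil))
    simp only [Walk.length_cons, Walk.length_nil] at d₁ d₂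
    omega
  calc W1 G (muMeasure G (1/4) x) (muMeasure G (1/4) y)
      ≤ ∑' u, (G.dist u (e u) : ℝ≥0∞) * muMeasure G (1/4) x u := by
        rw [hμ]
        refine W1_comp_symm_le G _ (fun u => ?_) e
        rw [muMeasure_quarter G hx]
        exact Set.indicator_apply_le' (fun _ => by norm_num) (fun _ => zero_le_one)
    _ = 1/4 * ↑(∑ u ∈ insert x (G.neighborFinset x), G.dist u (e u)) := by
        rw [muMeasure_quarter G hx, tsum_mul_indicator_const, Nat.cast_sum]
    _ ≤ 1/4 * 4 := by gcongr; exact_mod_cast hcost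
    _ = 1 := ENNReal.div_mul_cancel (by norm_num) (by norm_num)

theorem W1_muMeasure_quarter_eq_one (hG : G.Connected) (hxy : G.Adj x y)
    (hx : G.degree x = 3) (hy : G.degree y = 3)
    (hgirth : ∀ a ∈ (G.neighborFinset x).erase y, ∀ b ∈ (G.neighborFinset y).erase x,
      a ≠ b ∧ ¬G.Adj a b)
    (hpent : ∃ a₁ ∈ (G.neighborFinset x).erase y, ∃ a₂ ∈ (G.neighborFinset x).erase y,
      ∃ b₁ ∈ (G.neighborFinset y).erase x, ∃ b₂ ∈ (G.neighborFinset y).erase x,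
      a₁ ≠ a₂ ∧ b₁ ≠ b₂ ∧ (∃ w, G.Adj a₁ w ∧ G.Adj w b₁) ∧ (∃ w, G.Adj a₂ w ∧ G.Adj w b₂)) :
    W1 G (muMeasure G (1/4) x) (muMeasure G (1/4) y) = 1 :=
  le_antisymm
    (W1_muMeasure_quarter_le_one G hxy hx hy (fun a ha b hb => (hgirth a ha b hb).1) hpent)
    (one_le_W1_muMeasure_quarter G hG hxy hx hy hgirth)

end Cubic

instance : DecidableRel triplex.Adj := fun a b =>
  decidable_of_iff _ (fromRel_adj _ a b).symm

theorem cycleGraph_le_triplex : cycleGraph 12 ≤ triplex := by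
  have : ∀ u v : ZMod 12, u - v = 1 ∨ v - u = 1 → triplex.Adj u v := by decide
  exact fun u v h => this u v (cycleGraph_adj.mp h)

theorem triplex_connected : triplex.Connected :=
  cycleGraph_connected.mono cycleGraph_le_triplex

theorem triplex_neighborFinset (x : ZMod 12) :
    triplex.neighborFinset x = ({w | triplex.Adj x w} : Finset (ZMod 12)) := by
  ext; simp

theorem triplex_degree (x : ZMod 12) : triplex.degree x = 3 := by
  rw [← card_neighborFinset_eq_degree, triplex_neighborFinset]
  revert x
  decide

theorem triplex_no_short_cycle :
    ∀ x y : ZMod 12, triplex.Adj x y →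
      ∀ a ∈ (triplex.neighborFinset x).erase y, ∀ b ∈ (triplex.neighborFinset y).erase x,
        a ≠ b ∧ ¬triplex.Adj a b := by
  simp only [triplex_neighborFinset]
  decide

theorem triplex_two_pentagons :
    ∀ x y : ZMod 12, triplex.Adj x y →
      ∃ a₁ ∈ (triplex.neighborFinset x).erase y, ∃ a₂ ∈ (triplex.neighborFinset x).erase y,
      ∃ b₁ ∈ (triplex.neighborFinset y).erase x, ∃ b₂ ∈ (triplex.neighborFinset y).erase x,
        a₁ ≠ a₂ ∧ b₁ ≠ b₂ ∧ (∃ w, triplex.Adj a₁ w ∧ triplex.Adj w b₁) ∧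
          (∃ w, triplex.Adj a₂ w ∧ triplex.Adj w b₂) := by
  simp only [triplex_neighborFinset]
  decide

theorem triplex_ricciFlat (x y : ZMod 12) (hxy : triplex.Adj x y) :
    W1 triplex (muMeasure triplex (1/4) x) (muMeasure triplex (1/4) y) = 1 :=
  W1_muMeasure_quarter_eq_one triplex triplex_connected hxy (triplex_degree x) (triplex_degree y)
    (triplex_no_short_cycle x y hxy) (triplex_two_pentagons x y hxy)

end RicciFlatCubic
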